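/- arXiv:1705.08132 — 6 statements merged into one kernel-verified Lean document; each statement's English description precedes it below -/
import Mathlib

section
/- Let V be a vector space with a bilinear (magmatic) product *. Then * extends uniquely to a bilinear map T(V) ⊗ T(V) → T(V) on the tensor algebra such that for all f,g,h ∈ T(V) and x,y ∈ V: (i) f*1 = f; (ii) 1*f = ε(f)·1; (iii) x*(fy) = (x*f)*y − x*(f*y); (iv) (fg)*h = Σ (f*h⁽¹⁾)(g*h⁽²⁾), where Δ_⧢(h) = Σ h⁽¹⁾ ⊗ h⁽²⁾ is the deshuffling coproduct. -/
/-!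
Axiom (iv) at `h = y ∈ V`, together with (i), makes `f ↦ f * y` the derivation `D_y` of `T(V)`
extending `x ↦ x * y`, and (iv) says that `f ↦ (f * ·)` is an algebra morphism into the
convolution algebra of `End(T(V))` for the deshuffle bialgebra structure. So the product is
determined by the operators `L_x = (x * ·)`, `x ∈ V`, and axiom (iii) reads `L_x ∘ P_y = D_y ∘ L_x`
with `P_y = (· * y) + D_y`. Extending `y ↦ P_y` and `y ↦ D_y` to algebra morphisms
`P, D : T(V) → End(T(V))ᵐᵒᵖ` gives `L_x (Ψ g) = D(g) x` for `Ψ g = P(g) 1`. As `Ψ` is the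
identity up to terms of lower word length, it is bijective: this determines `L_x`, and read
backwards it defines `L_x`. In the code `D_y`, `P`, `D`, `Ψ`, `L_x` are `derivation m y`,
`shiftAction m`, `derivationAction m`, `twist m`, `leftMul m x`.
-/

open scoped TensorProduct

noncomputable section

variable (K V : Type*) [Field K] [AddCommGroup V] [Module K V]

/-- The deshuffling coproduct on the tensor algebra: the unique algebra morphism
sending `x : V` to `x ⊗ 1 + 1 ⊗ x`. -/
def deshuffle : TensorAlgebra K V →ₐ[K]
    TensorAlgebra K V ⊗[K] TensorAlgebra K V :=
  TensorAlgebra.lift K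
    (((TensorProduct.mk K (TensorAlgebra K V) (TensorAlgebra K V)).flip 1) ∘ₗ TensorAlgebra.ι K
      + (TensorProduct.mk K (TensorAlgebra K V) (TensorAlgebra K V) 1) ∘ₗ TensorAlgebra.ι K)

/-- The counit of the tensor algebra: the algebra morphism killing `V`. -/
def tensorCounit : TensorAlgebra K V →ₐ[K] K :=
  TensorAlgebra.lift K (0 : V →ₗ[K] K)

variable {K V}

/-- `star` is the canonical extension to `T(V)` of the magmatic product `m` on `V`:
(i) `f*1 = f`; (ii) `1*f = ε(f)1`; (iii) `x*(fy) = (x*f)*y − x*(f*y)`;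
(iv) `(fg)*h = Σ (f*h⁽¹⁾)(g*h⁽²⁾)`, and `star` restricted to `V` is `m`. -/
def IsMagExt (m : V →ₗ[K] V →ₗ[K] V)
    (star : TensorAlgebra K V →ₗ[K] TensorAlgebra K V →ₗ[K] TensorAlgebra K V) : Prop :=
  (∀ x y : V, star (TensorAlgebra.ι K x) (TensorAlgebra.ι K y) = TensorAlgebra.ι K (m x y)) ∧
  (∀ f, star f 1 = f) ∧
  (∀ f, star 1 f = (tensorCounit K V f) • 1) ∧
  (∀ (x : V) (f : TensorAlgebra K V) (y : V),
    star (TensorAlgebra.ι K x) (f * TensorAlgebra.ι K y)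
      = star (star (TensorAlgebra.ι K x) f) (TensorAlgebra.ι K y)
        - star (TensorAlgebra.ι K x) (star f (TensorAlgebra.ι K y))) ∧
  (∀ f g h, star (f * g) h
      = LinearMap.mul' K (TensorAlgebra K V)
          (TensorProduct.map (star f) (star g) (deshuffle K V h)))

open TensorAlgebra

theorem LinearMap.bijective_of_unipotent_on_filtration {R M : Type*} [Ring R] [AddCommGroup M]
    [Module R M] (φ : M →ₗ[R] M) (F : ℕ → Submodule R M) (hF : ∀ x, ∃ n, x ∈ F n)
    (h0 : ∀ x ∈ F 0, φ x = x) (hsucc : ∀ n, ∀ x ∈ F (n + 1), φ x - x ∈ F n) :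
    Function.Bijective φ := by
  have ker_trivial : ∀ n, ∀ x ∈ F n, φ x = 0 → x = 0 := by
    intro n
    induction n with
    | zero => intro x hx hφ; rwa [h0 x hx] at hφ
    | succ n ih =>
      intro x hx hφ
      refine ih x ?_ hφ
      simpa [hφ] using hsucc n x hx
  have mem_range : ∀ n, ∀ y ∈ F n, ∃ x, φ x = y := by
    intro n
    induction n with
    | zero => exact fun y hy => ⟨y, h0 y hy⟩
    | succ n ih =>
      intro y hy
      obtain ⟨z, hz⟩ := ih _ (hsucc n y hy)
      exact ⟨y - z, by rw [map_sub, hz, sub_sub_cancel]⟩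
  refine ⟨(injective_iff_map_eq_zero φ).2 fun x hx => ?_, fun y => ?_⟩
  · obtain ⟨n, hn⟩ := hF x
    exact ker_trivial n x hn hx
  · obtain ⟨n, hn⟩ := hF y
    exact mem_range n y hn

theorem Submodule.apply_mem_pow_of_leibniz {R A : Type*} [CommSemiring R] [Ring A] [Algebra R A]
    (D : A →ₗ[R] A) (hD : ∀ a b, D (a * b) = a * D b + D a * b) {S : Submodule R A}
    (hS : ∀ a ∈ S, D a ∈ S) (n : ℕ) : ∀ a ∈ S ^ n, D a ∈ S ^ n := by
  induction n with
  | zero =>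
    have hD1 : D 1 = 0 := by simpa using hD 1 1
    intro a ha
    obtain ⟨r, rfl⟩ := Submodule.mem_one.1 (pow_zero S ▸ ha)
    simp [Algebra.algebraMap_eq_smul_one, hD1]
  | succ n ih =>
    intro a ha
    rw [pow_succ] at ha ⊢
    refine Submodule.mul_induction_on ha (fun a ha b hb => ?_) fun a b ha hb => ?_
    · rw [hD]
      exact add_mem (Submodule.mul_mem_mul ha (hS b hb)) (Submodule.mul_mem_mul (ih a ha) hb)
    · rw [map_add]; exact add_mem ha hb

namespace TensorAlgebra

open TensorProduct in
instance instBialgebra : Bialgebra K (TensorAlgebra K V) :=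
  .ofAlgHom (deshuffle K V) (tensorCounit K V)
    (by ext x; simp [deshuffle, Algebra.TensorProduct.one_def, add_tmul, tmul_add]; abel)
    (by ext x; simp [deshuffle, tensorCounit])
    (by ext x; simp [deshuffle, tensorCounit])

def wordLengthFiltration (n : ℕ) : Submodule K (TensorAlgebra K V) :=
  (1 ⊔ LinearMap.range (ι K)) ^ n

lemma mem_one_sup_range_ι {b : TensorAlgebra K V} :
    b ∈ 1 ⊔ LinearMap.range (ι K) ↔ ∃ r y, b = algebraMap K _ r + ι K y := by
  simp [Submodule.mem_sup, Submodule.mem_one, eq_comm]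

lemma wordLengthFiltration_mono : Monotone (wordLengthFiltration (K := K) (V := V)) :=
  fun _ _ h => pow_le_pow_right' le_sup_left h

lemma exists_mem_wordLengthFiltration (f : TensorAlgebra K V) :
    ∃ n, f ∈ wordLengthFiltration n := by
  induction f using TensorAlgebra.induction with
  | algebraMap r => exact ⟨0, Submodule.algebraMap_mem r⟩
  | ι x => exact ⟨1, by simp [wordLengthFiltration, Submodule.mem_sup_right]⟩
  | mul a b ha hb =>
    obtain ⟨i, hi⟩ := ha
    obtain ⟨j, hj⟩ := hb
    exact ⟨i + j, by rw [wordLengthFiltration, pow_add]; exact Submodule.mul_mem_mul hi hj⟩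
  | add a b ha hb =>
    obtain ⟨i, hi⟩ := ha
    obtain ⟨j, hj⟩ := hb
    exact ⟨max i j, add_mem (wordLengthFiltration_mono (le_max_left i j) hi)
      (wordLengthFiltration_mono (le_max_right i j) hj)⟩

end TensorAlgebra

namespace MagExt

variable (m : V →ₗ[K] V →ₗ[K] V)

local notation "𝕋" => TensorAlgebra K V

-- The second component records the derivations `D_y` for all `y` at once, so that they are
-- linear in `y`.
def derivationHom : 𝕋 →ₐ[K] TrivSqZeroExt 𝕋 (V →ₗ[K] 𝕋) :=
  lift K
    { toFun x := TrivSqZeroExt.inl (ι K x) + TrivSqZeroExt.inr (ι K ∘ₗ m x)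
      map_add' a b := by ext <;> simp [LinearMap.comp_add]
      map_smul' c a := by ext <;> simp }

def derivation : V →ₗ[K] 𝕋 →ₗ[K] 𝕋 :=
  LinearMap.mk₂ K (fun y f => (derivationHom m f).snd y) (by simp) (by simp) (by simp) (by simp)

variable {m}

lemma fst_derivationHom (f : 𝕋) : (derivationHom m f).fst = f := by
  have : (TrivSqZeroExt.fstHom K 𝕋 (V →ₗ[K] 𝕋)).comp (derivationHom m) = AlgHom.id K 𝕋 := by
    ext x
    simp [derivationHom]
  exact congr($this f)

@[simp] lemma derivation_ι (x y : V) : derivation m y (ι K x) = ι K (m x y) := by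
  simp [derivation, derivationHom]

@[simp] lemma derivation_algebraMap (y : V) (r : K) : derivation m y (algebraMap K 𝕋 r) = 0 := by
  simp [derivation, TrivSqZeroExt.algebraMap_eq_inl']

@[simp] lemma derivation_one (y : V) : derivation m y 1 = 0 := by
  simpa using derivation_algebraMap (m := m) y 1

lemma derivation_mul (y : V) (f g : 𝕋) :
    derivation m y (f * g) = f * derivation m y g + derivation m y f * g := by
  simp [derivation, TrivSqZeroExt.snd_mul, fst_derivationHom]

variable (m)

def shiftAction : 𝕋 →ₐ[K] (Module.End K 𝕋)ᵐᵒᵖ :=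
  lift K ((MulOpposite.opLinearEquiv K).toLinearMap ∘ₗ
    ((LinearMap.mul K 𝕋).flip ∘ₗ ι K + derivation m))

def derivationAction : 𝕋 →ₐ[K] (Module.End K 𝕋)ᵐᵒᵖ :=
  lift K ((MulOpposite.opLinearEquiv K).toLinearMap ∘ₗ derivation m)

def twist : 𝕋 →ₗ[K] 𝕋 :=
  ((MulOpposite.opLinearEquiv K).symm.toLinearMap ∘ₗ (shiftAction m).toLinearMap).flip 1

def evalDerivationAction : V →ₗ[K] 𝕋 →ₗ[K] 𝕋 :=
  ((MulOpposite.opLinearEquiv K).symm.toLinearMap ∘ₗ (derivationAction m).toLinearMap).flip ∘ₗ ι K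

variable {m}

lemma twist_apply (g : 𝕋) : twist m g = (shiftAction m g).unop 1 := rfl

lemma evalDerivationAction_apply (x : V) (g : 𝕋) :
    evalDerivationAction m x g = (derivationAction m g).unop (ι K x) := rfl

lemma shiftAction_ι (y : V) (f : 𝕋) :
    (shiftAction m (ι K y)).unop f = f * ι K y + derivation m y f := by
  simp [shiftAction]

lemma twist_algebraMap (r : K) : twist m (algebraMap K 𝕋 r) = algebraMap K 𝕋 r := by
  simp [twist_apply, Algebra.algebraMap_eq_smul_one]

lemma twist_one : twist m 1 = 1 := by
  simpa using twist_algebraMap (m := m) 1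

lemma twist_mul_ι (g : 𝕋) (y : V) :
    twist m (g * ι K y) = twist m g * ι K y + derivation m y (twist m g) := by
  rw [twist_apply, map_mul, MulOpposite.unop_mul, Module.End.mul_apply, shiftAction_ι, twist_apply]

lemma evalDerivationAction_mul_ι (x : V) (g : 𝕋) (y : V) :
    evalDerivationAction m x (g * ι K y) = derivation m y (evalDerivationAction m x g) := by
  simp [evalDerivationAction_apply, derivationAction]

lemma evalDerivationAction_one (x : V) : evalDerivationAction m x 1 = ι K x := by
  simp [evalDerivationAction_apply]

lemma derivation_mem_wordLengthFiltration (y : V) {n : ℕ} {f : 𝕋}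
    (hf : f ∈ wordLengthFiltration n) : derivation m y f ∈ wordLengthFiltration n := by
  refine Submodule.apply_mem_pow_of_leibniz _ (derivation_mul y) (fun b hb => ?_) n f hf
  obtain ⟨r, x, rfl⟩ := mem_one_sup_range_ι.1 hb
  simpa using Submodule.mem_sup_right (LinearMap.mem_range_self (ι K) (m x y))

lemma twist_mul_sub (a : 𝕋) (r : K) (y : V) :
    twist m (a * (algebraMap K 𝕋 r + ι K y)) - a * (algebraMap K 𝕋 r + ι K y)
      = (twist m a - a) * (algebraMap K 𝕋 r + ι K y) + derivation m y (twist m a) := by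
  simp only [mul_add, map_add, twist_mul_ι, ← Algebra.commutes r, ← Algebra.smul_def, map_smul,
    sub_mul, smul_sub]
  abel

lemma twist_sub_mem_wordLengthFiltration (n : ℕ) {f : 𝕋}
    (hf : f ∈ wordLengthFiltration (n + 1)) : twist m f - f ∈ wordLengthFiltration n := by
  induction n generalizing f with
  | zero =>
    rw [wordLengthFiltration, pow_one] at hf
    obtain ⟨r, y, rfl⟩ := mem_one_sup_range_ι.1 hf
    have h := twist_mul_sub (m := m) 1 r y
    rw [twist_one, sub_self, zero_mul, zero_add, derivation_one, one_mul] at h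
    rw [h]
    exact zero_mem _
  | succ n ih =>
    rw [wordLengthFiltration, pow_succ] at hf
    refine Submodule.mul_induction_on hf (fun a ha b hb => ?_) fun a b ha hb => ?_
    · obtain ⟨r, y, rfl⟩ := mem_one_sup_range_ι.1 hb
      rw [twist_mul_sub]
      have hta : twist m a ∈ wordLengthFiltration (n + 1) := by
        have := add_mem ha (wordLengthFiltration_mono n.le_succ (ih ha))
        rwa [add_sub_cancel] at this
      exact add_mem (Submodule.mul_mem_mul (ih ha) hb) (derivation_mem_wordLengthFiltration y hta)
    · simpa [add_sub_add_comm] using add_mem ha hb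

variable (m) in
lemma twist_bijective : Function.Bijective (twist m) := by
  refine LinearMap.bijective_of_unipotent_on_filtration _ wordLengthFiltration
    TensorAlgebra.exists_mem_wordLengthFiltration (fun f hf => ?_)
    fun n f hf => twist_sub_mem_wordLengthFiltration n hf
  obtain ⟨r, rfl⟩ := Submodule.mem_one.1 hf
  exact twist_algebraMap r

variable (m)

def leftMul : V →ₗ[K] 𝕋 →ₗ[K] 𝕋 :=
  LinearMap.lcomp K 𝕋 (LinearEquiv.ofBijective (twist m) (twist_bijective m)).symm.toLinearMap
    ∘ₗ evalDerivationAction m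

def extension : 𝕋 →ₗ[K] 𝕋 →ₗ[K] 𝕋 :=
  (WithConv.linearEquiv K (𝕋 →ₗ[K] 𝕋)).toLinearMap ∘ₗ
    (lift K ((WithConv.linearEquiv K (𝕋 →ₗ[K] 𝕋)).symm.toLinearMap ∘ₗ leftMul m)).toLinearMap

variable {m}

lemma leftMul_twist (x : V) (g : 𝕋) : leftMul m x (twist m g) = evalDerivationAction m x g := by
  simp [leftMul, LinearEquiv.ofBijective_symm_apply_apply]

lemma leftMul_one (x : V) : leftMul m x 1 = ι K x := by
  rw [← twist_one, leftMul_twist, evalDerivationAction_one]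

lemma leftMul_mul_ι (x : V) (f : 𝕋) (y : V) :
    leftMul m x (f * ι K y) = derivation m y (leftMul m x f) - leftMul m x (derivation m y f) := by
  obtain ⟨g, rfl⟩ := (twist_bijective m).2 f
  rw [eq_sub_iff_add_eq, ← map_add, ← twist_mul_ι, leftMul_twist, leftMul_twist,
    evalDerivationAction_mul_ι]

lemma extension_ι (x : V) : extension m (ι K x) = leftMul m x := by
  simp [extension]

lemma extension_mul (f g h : 𝕋) :
    extension m (f * g) h
      = LinearMap.mul' K 𝕋
          (TensorProduct.map (extension m f) (extension m g) (deshuffle K V h)) := by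
  simp only [extension, LinearMap.comp_apply, AlgHom.toLinearMap_apply, map_mul]
  rfl

lemma extension_one_left (h : 𝕋) : extension m 1 h = tensorCounit K V h • 1 := by
  simp only [extension, LinearMap.comp_apply, AlgHom.toLinearMap_apply, map_one]
  exact Algebra.algebraMap_eq_smul_one (A := 𝕋) (tensorCounit K V h)

lemma extension_one_right (f : 𝕋) : extension m f 1 = f := by
  induction f using TensorAlgebra.induction with
  | algebraMap r =>
    rw [Algebra.algebraMap_eq_smul_one, map_smul, LinearMap.smul_apply, extension_one_left,
      map_one, one_smul]
  | ι x => rw [extension_ι, leftMul_one]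
  | mul a b ha hb => simp [extension_mul, Algebra.TensorProduct.one_def, ha, hb]
  | add a b ha hb => rw [map_add, LinearMap.add_apply, ha, hb]

lemma apply_ι_right_eq_derivation {s : 𝕋 →ₗ[K] 𝕋 →ₗ[K] 𝕋}
    (hιι : ∀ x y : V, s (ι K x) (ι K y) = ι K (m x y)) (hone_right : ∀ f, s f 1 = f)
    (hone_left : ∀ f, s 1 f = tensorCounit K V f • 1)
    (hmul : ∀ f g h, s (f * g) h
      = LinearMap.mul' K 𝕋 (TensorProduct.map (s f) (s g) (deshuffle K V h)))
    (f : 𝕋) (y : V) : s f (ι K y) = derivation m y f := by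
  induction f using TensorAlgebra.induction with
  | algebraMap r =>
    simp [Algebra.algebraMap_eq_smul_one, hone_left, tensorCounit]
  | ι x => rw [hιι, derivation_ι]
  | mul a b ha hb =>
    simp [hmul, deshuffle, TensorProduct.map_tmul, ha, hb, hone_right, derivation_mul, add_comm]
  | add a b ha hb => rw [map_add, LinearMap.add_apply, ha, hb, map_add]

lemma extension_ι_ι (x y : V) : extension m (ι K x) (ι K y) = ι K (m x y) := by
  rw [extension_ι, ← one_mul (ι K y), leftMul_mul_ι, leftMul_one, derivation_one, map_zero,
    sub_zero, derivation_ι]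

lemma isMagExt_extension : IsMagExt m (extension m) := by
  have extension_ι_right := apply_ι_right_eq_derivation (extension_ι_ι (m := m))
    extension_one_right extension_one_left extension_mul
  refine ⟨extension_ι_ι, extension_one_right, extension_one_left, fun x f y => ?_, extension_mul⟩
  rw [extension_ι_right, extension_ι_right, extension_ι, leftMul_mul_ι]

end MagExt

namespace IsMagExt

open MagExt

variable {m : V →ₗ[K] V →ₗ[K] V}
  {s : TensorAlgebra K V →ₗ[K] TensorAlgebra K V →ₗ[K] TensorAlgebra K V}

lemma apply_ι_right (hs : IsMagExt m s) (f : TensorAlgebra K V) (y : V) :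
    s f (ι K y) = derivation m y f :=
  apply_ι_right_eq_derivation hs.1 hs.2.1 hs.2.2.1 hs.2.2.2.2 f y

lemma comp_shiftAction (hs : IsMagExt m s) (x : V) (g : TensorAlgebra K V) :
    s (ι K x) ∘ₗ (shiftAction m g).unop = (derivationAction m g).unop ∘ₗ s (ι K x) := by
  induction g using TensorAlgebra.induction with
  | algebraMap r => ext; simp [Algebra.algebraMap_eq_smul_one]
  | ι y =>
    ext f
    simp [shiftAction_ι, derivationAction, hs.2.2.2.1, hs.apply_ι_right]
  | mul a b ha hb =>
    rw [map_mul, map_mul, MulOpposite.unop_mul, MulOpposite.unop_mul, Module.End.mul_eq_comp,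
      Module.End.mul_eq_comp, ← LinearMap.comp_assoc, hb, LinearMap.comp_assoc, ha,
      LinearMap.comp_assoc]
  | add a b ha hb =>
    rw [map_add, map_add, MulOpposite.unop_add, MulOpposite.unop_add, LinearMap.comp_add, ha, hb,
      LinearMap.add_comp]

lemma apply_ι_eq_leftMul (hs : IsMagExt m s) (x : V) : s (ι K x) = leftMul m x := by
  ext f
  obtain ⟨g, rfl⟩ := (twist_bijective m).2 f
  rw [leftMul_twist, twist_apply, ← LinearMap.comp_apply, hs.comp_shiftAction,
    LinearMap.comp_apply, hs.2.1, evalDerivationAction_apply]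

lemma eq_extension (hs : IsMagExt m s) : s = extension m := by
  ext1 f
  induction f using TensorAlgebra.induction with
  | algebraMap r =>
    ext h
    simp [Algebra.algebraMap_eq_smul_one, hs.2.2.1, extension_one_left]
  | ι x => rw [hs.apply_ι_eq_leftMul, extension_ι]
  | mul a b ha hb =>
    ext h
    rw [hs.2.2.2.2, extension_mul, ha, hb]
  | add a b ha hb => rw [map_add, map_add, ha, hb]

end IsMagExt

/-- any magmatic product on `V` extends uniquely to `T(V)`
satisfying the four axioms. -/
theorem magmatic_product_extends_uniquely (m : V →ₗ[K] V →ₗ[K] V) :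
    ∃! star : TensorAlgebra K V →ₗ[K] TensorAlgebra K V →ₗ[K] TensorAlgebra K V,
      IsMagExt m star :=
  ⟨MagExt.extension m, MagExt.isMagExt_extension, fun _ hs => hs.eq_extension⟩
end
end

section
/- Let (V,*) be a magmatic algebra and extend * to T(V) as in the canonical extension. Then for every k ∈ ℕ, V^{⊗k} * T(V) ⊆ V^{⊗k}; that is, the homogeneous components of T(V) are stable under right *-multiplication by arbitrary elements of T(V). -/
open scoped TensorProduct

noncomputable section

variable (K V : Type*) [Field K] [AddCommGroup V] [Module K V]

variable {K V}

/-!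
Right `*`-multiplication by a vector `y` is a derivation of `T(V)`, because `Δ y = y ⊗ 1 + 1 ⊗ y`;
as `x * y = m x y ∈ V`, it preserves every `V^{⊗n}`. Rule (iii), used by induction on the
degree, then shows that `x * g ∈ V` for every `x ∈ V` and every `g`. Finally rule (iv) turns
`(x f) * g` into `Σ (x * g⁽¹⁾)(f * g⁽²⁾) ∈ V · V^{⊗k}` for `f ∈ V^{⊗k}`, and induction on `k` concludes.
-/

open TensorAlgebra

local notation "𝒱" => LinearMap.range (ι K (M := V))

lemma deshuffle_ι (y : V) : deshuffle K V (ι K y) = ι K y ⊗ₜ[K] 1 + 1 ⊗ₜ[K] ι K y := by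
  simp [deshuffle]

namespace IsMagExt

variable {m : V →ₗ[K] V →ₗ[K] V}
  {star : TensorAlgebra K V →ₗ[K] TensorAlgebra K V →ₗ[K] TensorAlgebra K V}

lemma star_ι_ι (h : IsMagExt m star) (x y : V) : star (ι K x) (ι K y) = ι K (m x y) := h.1 x y

lemma star_one (h : IsMagExt m star) (f : TensorAlgebra K V) : star f 1 = f := h.2.1 f

lemma one_star (h : IsMagExt m star) (f : TensorAlgebra K V) :
    star 1 f = tensorCounit K V f • 1 := h.2.2.1 f

lemma ι_star_mul_ι (h : IsMagExt m star) (x : V) (f : TensorAlgebra K V) (y : V) :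
    star (ι K x) (f * ι K y) = star (star (ι K x) f) (ι K y) - star (ι K x) (star f (ι K y)) :=
  h.2.2.2.1 x f y

lemma mul_star (h : IsMagExt m star) (f g w : TensorAlgebra K V) :
    star (f * g) w = LinearMap.mul' K _ (TensorProduct.map (star f) (star g) (deshuffle K V w)) :=
  h.2.2.2.2 f g w

lemma mul_star_ι (h : IsMagExt m star) (f g : TensorAlgebra K V) (y : V) :
    star (f * g) (ι K y) = star f (ι K y) * g + f * star g (ι K y) := by
  rw [h.mul_star, deshuffle_ι, map_add, map_add, TensorProduct.map_tmul, TensorProduct.map_tmul,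
    LinearMap.mul'_apply, LinearMap.mul'_apply, h.star_one, h.star_one]

lemma mul_star_mem_mul (h : IsMagExt m star) {f g : TensorAlgebra K V}
    {P Q : Submodule K (TensorAlgebra K V)} (hf : ∀ u, star f u ∈ P) (hg : ∀ v, star g v ∈ Q)
    (w : TensorAlgebra K V) : star (f * g) w ∈ P * Q := by
  rw [h.mul_star]
  induction deshuffle K V w using TensorProduct.induction_on with
  | zero => simp
  | tmul u v => exact Submodule.mul_mem_mul (hf u) (hg v)
  | add u v hu hv => rw [map_add, map_add]; exact add_mem hu hv

lemma algebraMap_star_mem_one (h : IsMagExt m star) (c : K) (g : TensorAlgebra K V) :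
    star (algebraMap K _ c) g ∈ (1 : Submodule K (TensorAlgebra K V)) := by
  rw [Algebra.algebraMap_eq_smul_one, map_smul, LinearMap.smul_apply, h.one_star, smul_smul,
    ← Algebra.algebraMap_eq_smul_one]
  exact Submodule.algebraMap_mem _

lemma star_ι_mem_pow (h : IsMagExt m star) {n : ℕ} {f : TensorAlgebra K V} (hf : f ∈ 𝒱 ^ n)
    (y : V) : star f (ι K y) ∈ 𝒱 ^ n := by
  induction hf using Submodule.pow_induction_on_left' with
  | algebraMap c => exact h.algebraMap_star_mem_one c _
  | add f f' i _ _ hf hf' => rw [map_add, LinearMap.add_apply]; exact add_mem hf hf'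
  | mem_mul a ha i b hb ih =>
    obtain ⟨x, rfl⟩ := ha
    rw [h.mul_star_ι, h.star_ι_ι, pow_succ']
    exact add_mem (Submodule.mul_mem_mul (LinearMap.mem_range_self _ _) hb)
      (Submodule.mul_mem_mul (LinearMap.mem_range_self _ _) ih)

lemma ι_star_mem_of_mem_pow (h : IsMagExt m star) (x : V) {n : ℕ} {g : TensorAlgebra K V}
    (hg : g ∈ 𝒱 ^ n) : star (ι K x) g ∈ 𝒱 := by
  induction n generalizing g with
  | zero =>
    obtain ⟨c, rfl⟩ := Submodule.mem_one.mp (pow_zero 𝒱 ▸ hg)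
    rw [Algebra.algebraMap_eq_smul_one, map_smul, h.star_one]
    exact Submodule.smul_mem _ _ (LinearMap.mem_range_self _ _)
  | succ n ih =>
    rw [pow_succ] at hg
    induction hg using Submodule.mul_induction_on' with
    | mem_mul_mem a ha b hb =>
      obtain ⟨y, rfl⟩ := hb
      rw [h.ι_star_mul_ι]
      have hxa : star (ι K x) a ∈ 𝒱 ^ 1 := (pow_one 𝒱).symm ▸ ih ha
      exact sub_mem (pow_one 𝒱 ▸ h.star_ι_mem_pow hxa y) (ih (h.star_ι_mem_pow ha y))
    | add a _ b _ ha hb => rw [map_add]; exact add_mem ha hb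

lemma ι_star_mem (h : IsMagExt m star) (x : V) (g : TensorAlgebra K V) : star (ι K x) g ∈ 𝒱 := by
  induction g using DirectSum.Decomposition.inductionOn (ℳ := (𝒱 ^ ·)) with
  | zero => simp
  | homogeneous g => exact h.ι_star_mem_of_mem_pow x g.2
  | add g g' hg hg' => rw [map_add]; exact add_mem hg hg'

lemma star_mem_pow (h : IsMagExt m star) {k : ℕ} {f : TensorAlgebra K V} (hf : f ∈ 𝒱 ^ k)
    (g : TensorAlgebra K V) : star f g ∈ 𝒱 ^ k := by
  induction hf using Submodule.pow_induction_on_left' generalizing g with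
  | algebraMap c => exact h.algebraMap_star_mem_one c g
  | add f f' i _ _ hf hf' => rw [map_add, LinearMap.add_apply]; exact add_mem (hf g) (hf' g)
  | mem_mul a ha i b hb ih =>
    obtain ⟨x, rfl⟩ := ha
    rw [pow_succ']
    exact h.mul_star_mem_mul (h.ι_star_mem x) ih g

end IsMagExt

/-- homogeneous components `V^{⊗k}` of `T(V)` are stable under
right `*`-multiplication by arbitrary elements of `T(V)`. -/
theorem homogeneous_components_star_stable (m : V →ₗ[K] V →ₗ[K] V)
    (star : TensorAlgebra K V →ₗ[K] TensorAlgebra K V →ₗ[K] TensorAlgebra K V)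
    (hstar : IsMagExt m star) :
    ∀ (k : ℕ) (f g : TensorAlgebra K V),
      f ∈ (LinearMap.range (TensorAlgebra.ι K : V →ₗ[K] TensorAlgebra K V)) ^ k →
        star f g ∈ (LinearMap.range (TensorAlgebra.ι K : V →ₗ[K] TensorAlgebra K V)) ^ k :=
  fun _ _ g hf => hstar.star_mem_pow hf g

end
end

section
/- Let (V,◁) be an associative algebra. In the extension of ◁ to the symmetric algebra S(V) (via the post-Lie structure (V,0,◁)), for all x₁,…,x_k, y₁,…,y_l ∈ V: x₁⋯x_k ◁ y₁⋯y_l = Σ_{θ:[l]↪[k]} (∏_{i∉Im(θ)} x_i)·(∏_{i=1}^{l} x_{θ(i)} ◁ y_i), where the sum is over injections θ from {1,…,l} to {1,…,k}. In particular x ◁ y₁⋯y_l = 0 whenever l ≥ 2 and x ∈ V. -/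
open scoped TensorProduct

noncomputable section

private lemma snoc_emb_injective {l k : ℕ} (θ : Fin l ↪ Fin k) (i : Fin k)
    (h : ∀ q, θ q ≠ i) :
    Function.Injective (Fin.snoc (θ : Fin l → Fin k) i : Fin (l + 1) → Fin k) := by
  intro a b hab
  induction a using Fin.lastCases with
  | last =>
    induction b using Fin.lastCases with
    | last => rfl
    | cast b =>
      rw [Fin.snoc_last, Fin.snoc_castSucc] at hab
      exact absurd hab.symm (h b)
  | cast a =>
    induction b using Fin.lastCases with
    | last =>
      rw [Fin.snoc_last, Fin.snoc_castSucc] at hab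
      exact absurd hab (h a)
    | cast b =>
      rw [Fin.snoc_castSucc, Fin.snoc_castSucc] at hab
      exact congrArg Fin.castSucc (θ.injective hab)

/-- let `(V,◁)` be an associative algebra and extend `◁` to the
symmetric algebra `S(V)` (realized as a commutative algebra `S` with primitive
generators `j(V)`, coproduct `Δ` and counit `ε`) via the post-Lie extension
axioms. Then on products of generators:
`x₁⋯x_k ◁ y₁⋯y_l = Σ_{θ:[l]↪[k]} (∏_{i∉Im θ} x_i)(∏_i x_{θ(i)} ◁ y_i)`,
and in particular `x ◁ y₁⋯y_l = 0` for `x ∈ V` and `l ≥ 2`. -/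
theorem assoc_extension_formula
    (K V S : Type*) [Field K] [AddCommGroup V] [Module K V]
    [CommRing S] [Algebra K S]
    (m : V →ₗ[K] V →ₗ[K] V)
    (hassoc : ∀ x y z : V, m (m x y) z = m x (m y z))
    (j : V →ₗ[K] S)
    (eps : S →ₐ[K] K) (heps : ∀ x : V, eps (j x) = 0)
    (Δ : S →ₐ[K] S ⊗[K] S)
    (hΔ : ∀ x : V, Δ (j x) = j x ⊗ₜ[K] 1 + 1 ⊗ₜ[K] j x)
    (star : S →ₗ[K] S →ₗ[K] S)
    (hgen : ∀ x y : V, star (j x) (j y) = j (m x y))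
    (hunit : ∀ f : S, star f 1 = f)
    (hcounit : ∀ f : S, star 1 f = eps f • 1)
    (hrec : ∀ (f g : S) (y : V),
      star f (g * j y) = star (star f g) (j y) - star f (star g (j y)))
    (hmul : ∀ f g h : S,
      star (f * g) h = LinearMap.mul' K S (TensorProduct.map (star f) (star g) (Δ h))) :
    (∀ (k l : ℕ) (x : Fin k → V) (y : Fin l → V),
      star (∏ i, j (x i)) (∏ i, j (y i))
        = ∑ θ : Fin l ↪ Fin k,
            (∏ i ∈ Finset.univ.filter (fun i : Fin k => ∀ q : Fin l, θ q ≠ i), j (x i))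
              * ∏ q : Fin l, j (m (x (θ q)) (y q))) ∧
    (∀ (x : V) (l : ℕ), 2 ≤ l → ∀ y : Fin l → V,
      star (j x) (∏ i, j (y i)) = 0) := by
  classical
  -- Leibniz rule for `◁` by a single generator
  have leib : ∀ (f g : S) (y : V),
      star (f * g) (j y) = star f (j y) * g + f * star g (j y) := by
    intro f g y
    rw [hmul, hΔ, map_add, TensorProduct.map_tmul, TensorProduct.map_tmul, map_add,
      LinearMap.mul'_apply, LinearMap.mul'_apply, hunit, hunit]
  -- derivation formula on products of generators
  have der : ∀ (n : ℕ) (s : Finset (Fin n)) (z : Fin n → V) (y : V),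
      star (∏ i ∈ s, j (z i)) (j y)
        = ∑ i ∈ s, (∏ i' ∈ s.erase i, j (z i')) * j (m (z i) y) := by
    intro n s z y
    induction s using Finset.induction_on with
    | empty => simp [hcounit, heps]
    | @insert a s ha ih =>
      rw [Finset.prod_insert ha, leib, ih, hgen, Finset.sum_insert ha,
        Finset.erase_insert ha, Finset.mul_sum]
      rw [mul_comm (j (m (z a) y)) (∏ i ∈ s, j (z i))]
      congr 1
      refine Finset.sum_congr rfl fun i hi => ?_
      rw [Finset.erase_insert_of_ne (fun hai => ha (by rw [hai]; exact hi)),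
        Finset.prod_insert (fun hmem => ha (Finset.mem_of_mem_erase hmem))]
      ring
  have main : ∀ (l k : ℕ) (x : Fin k → V) (y : Fin l → V),
      star (∏ i, j (x i)) (∏ i, j (y i))
        = ∑ θ : Fin l ↪ Fin k,
            (∏ i ∈ Finset.univ.filter (fun i : Fin k => ∀ q : Fin l, θ q ≠ i), j (x i))
              * ∏ q : Fin l, j (m (x (θ q)) (y q)) := by
    intro l
    induction l with
    | zero =>
      intro k x y
      haveI : Unique (Fin 0 ↪ Fin k) :=
        ⟨⟨⟨Fin.elim0, fun a => a.elim0⟩⟩, fun θ => Function.Embedding.ext fun a => a.elim0⟩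
      rw [show (Finset.univ : Finset (Fin 0 ↪ Fin k)) = {default} from Finset.univ_unique,
        Finset.sum_singleton]
      simp [hunit]
    | succ l ih =>
      intro k x y
      rw [Fin.prod_univ_castSucc (fun q => j (y q)), hrec]
      -- the first term of the recursion
      rw [ih k x (fun q => y q.castSucc), map_sum, LinearMap.sum_apply]
      -- rewrite each summand with the Leibniz rule and the derivation formula
      have step1 : ∀ θ' : Fin l ↪ Fin k,
          star ((∏ i ∈ Finset.univ.filter (fun i : Fin k => ∀ q : Fin l, θ' q ≠ i), j (x i))
              * ∏ q : Fin l, j (m (x (θ' q)) (y q.castSucc))) (j (y (Fin.last l)))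
            = (∑ i ∈ Finset.univ.filter (fun i : Fin k => ∀ q : Fin l, θ' q ≠ i),
                  (∏ i' ∈ (Finset.univ.filter
                      (fun i : Fin k => ∀ q : Fin l, θ' q ≠ i)).erase i, j (x i'))
                    * j (m (x i) (y (Fin.last l))))
                * (∏ q : Fin l, j (m (x (θ' q)) (y q.castSucc)))
              + (∏ i ∈ Finset.univ.filter (fun i : Fin k => ∀ q : Fin l, θ' q ≠ i), j (x i))
                * ∑ q : Fin l,
                    (∏ q' ∈ Finset.univ.erase q, j (m (x (θ' q')) (y q'.castSucc)))
                      * j (m (m (x (θ' q)) (y q.castSucc)) (y (Fin.last l))) := by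
        intro θ'
        rw [leib, der k _ x (y (Fin.last l)),
          der l Finset.univ (fun q => m (x (θ' q)) (y q.castSucc)) (y (Fin.last l))]
      simp only [step1]
      -- the second term of the recursion
      have hw : ∀ q : Fin l,
          (∏ q' ∈ Finset.univ.erase q, j (y q'.castSucc))
              * j (m (y q.castSucc) (y (Fin.last l)))
            = ∏ q' : Fin l,
                j (Function.update (fun q'' : Fin l => y q''.castSucc) q
                    (m (y q.castSucc) (y (Fin.last l))) q') := by
        intro q
        rw [← Finset.mul_prod_erase Finset.univ _ (Finset.mem_univ q),
          Function.update_self, mul_comm]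
        congr 1
        exact Finset.prod_congr rfl fun q' hq' => by
          rw [Function.update_of_ne (Finset.ne_of_mem_erase hq')]
      have hw2 : ∀ (θ' : Fin l ↪ Fin k) (q : Fin l),
          (∏ q' : Fin l,
              j (m (x (θ' q'))
                (Function.update (fun q'' : Fin l => y q''.castSucc) q
                  (m (y q.castSucc) (y (Fin.last l))) q')))
            = (∏ q' ∈ Finset.univ.erase q, j (m (x (θ' q')) (y q'.castSucc)))
                * j (m (m (x (θ' q)) (y q.castSucc)) (y (Fin.last l))) := by
        intro θ' q
        rw [← Finset.mul_prod_erase Finset.univ _ (Finset.mem_univ q),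
          Function.update_self, hassoc, mul_comm]
        congr 1
        exact Finset.prod_congr rfl fun q' hq' => by
          rw [Function.update_of_ne (Finset.ne_of_mem_erase hq')]
      have step2 : star (∏ i, j (x i))
            (star (∏ q : Fin l, j (y q.castSucc)) (j (y (Fin.last l))))
          = ∑ θ' : Fin l ↪ Fin k,
              (∏ i ∈ Finset.univ.filter (fun i : Fin k => ∀ q : Fin l, θ' q ≠ i), j (x i))
                * ∑ q : Fin l,
                    (∏ q' ∈ Finset.univ.erase q, j (m (x (θ' q')) (y q'.castSucc)))
                      * j (m (m (x (θ' q)) (y q.castSucc)) (y (Fin.last l))) := by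
        rw [der l Finset.univ (fun q => y q.castSucc) (y (Fin.last l)), map_sum]
        have : ∀ q : Fin l,
            star (∏ i, j (x i))
                ((∏ q' ∈ Finset.univ.erase q, j (y q'.castSucc))
                  * j (m (y q.castSucc) (y (Fin.last l))))
              = ∑ θ' : Fin l ↪ Fin k,
                  (∏ i ∈ Finset.univ.filter (fun i : Fin k => ∀ q : Fin l, θ' q ≠ i), j (x i))
                    * ((∏ q' ∈ Finset.univ.erase q, j (m (x (θ' q')) (y q'.castSucc)))
                        * j (m (m (x (θ' q)) (y q.castSucc)) (y (Fin.last l)))) := by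
          intro q
          rw [hw q, ih k x _]
          exact Finset.sum_congr rfl fun θ' _ => by rw [hw2 θ' q]
        rw [Finset.sum_congr rfl fun q _ => this q, Finset.sum_comm]
        exact Finset.sum_congr rfl fun θ' _ => by rw [Finset.mul_sum]
      rw [step2, Finset.sum_add_distrib, add_sub_cancel_right]
      -- now the combinatorial reindexing over injections
      rw [Finset.sum_congr rfl (fun θ' (_ : θ' ∈ Finset.univ) => Finset.sum_mul _ _ _)]
      rw [Finset.sum_sigma' Finset.univ
        (fun θ' : Fin l ↪ Fin k =>
          Finset.univ.filter (fun i : Fin k => ∀ q : Fin l, θ' q ≠ i))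
        (fun θ' i0 =>
          ((∏ i' ∈ (Finset.univ.filter
              (fun i : Fin k => ∀ q : Fin l, θ' q ≠ i)).erase i0, j (x i'))
            * j (m (x i0) (y (Fin.last l))))
            * ∏ q : Fin l, j (m (x (θ' q)) (y q.castSucc)))]
      refine Finset.sum_bij'
        (fun p hp => (⟨Fin.snoc (p.1 : Fin l → Fin k) p.2,
          snoc_emb_injective p.1 p.2
            (by
              have := (Finset.mem_sigma.mp hp).2
              exact (Finset.mem_filter.mp this).2)⟩ : Fin (l + 1) ↪ Fin k))
        (fun θ _ => ⟨(⟨Fin.castSucc, Fin.castSucc_injective l⟩ :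
            Fin l ↪ Fin (l + 1)).trans θ, θ (Fin.last l)⟩)
        (fun _ _ => Finset.mem_univ _)
        (fun θ _ => ?_) (fun p hp => ?_) (fun θ _ => ?_) (fun p hp => ?_)
      · -- membership of the inverse image in the sigma set
        refine Finset.mem_sigma.mpr ⟨Finset.mem_univ _, Finset.mem_filter.mpr
          ⟨Finset.mem_univ _, fun q => ?_⟩⟩
        exact θ.injective.ne (Fin.castSucc_lt_last q).ne
      · -- left inverse
        obtain ⟨θ', i0⟩ := p
        refine Sigma.ext ?_ (heq_of_eq ?_)
        · exact Function.Embedding.ext fun q => by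
            simp [Fin.snoc_castSucc]
        · simp [Fin.snoc_last]
      · -- right inverse
        exact Function.Embedding.ext fun a => by
          induction a using Fin.lastCases with
          | last => simp [Fin.snoc_last]
          | cast a => simp [Fin.snoc_castSucc]
      · -- values agree
        have hmem := (Finset.mem_sigma.mp hp).2
        have hfil : (Finset.univ.filter (fun i : Fin k => ∀ q : Fin (l + 1),
              (Fin.snoc (p.1 : Fin l → Fin k) p.2 : Fin (l + 1) → Fin k) q ≠ i))
            = (Finset.univ.filter
                (fun i : Fin k => ∀ q : Fin l, p.1 q ≠ i)).erase p.2 := by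
          ext i0
          simp only [Finset.mem_filter, Finset.mem_erase, Finset.mem_univ, true_and]
          constructor
          · intro h
            refine ⟨fun hh => h (Fin.last l) ?_, fun q => ?_⟩
            · rw [Fin.snoc_last, hh]
            · have := h q.castSucc
              rwa [Fin.snoc_castSucc] at this
          · rintro ⟨hne, hall⟩ q
            induction q using Fin.lastCases with
            | last => rw [Fin.snoc_last]; exact fun hh => hne hh.symm
            | cast q => rw [Fin.snoc_castSucc]; exact hall q
        simp only [Function.Embedding.coeFn_mk]
        rw [Fin.prod_univ_castSucc
          (fun q : Fin (l + 1) =>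
            j (m (x ((Fin.snoc (p.1 : Fin l → Fin k) p.2 : Fin (l + 1) → Fin k) q)) (y q)))]
        simp only [Fin.snoc_castSucc, Fin.snoc_last, hfil]
        ring
  refine ⟨fun k l x y => main l k x y, fun x l hl y => ?_⟩
  haveI : IsEmpty (Fin l ↪ Fin 1) := by
    refine ⟨fun θ => ?_⟩
    have h01 : (⟨0, by omega⟩ : Fin l) ≠ ⟨1, by omega⟩ := by simp [Fin.ext_iff]
    exact h01 (θ.injective (Subsingleton.elim _ _))
  have := main l 1 (fun _ => x) y
  rw [Fin.prod_univ_one] at this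
  rw [this, Finset.univ_eq_empty, Finset.sum_empty]
end
end

section
/- In the enveloping algebra U(g_a), realized as (S(g_a),◂), for all indices i₁,…,i_n ∈ [N]: ε_{i₁} ◂ ⋯ ◂ ε_{i_n} = Σ_{I ⊆ [n]} λ(I)·(∏_{p∈I} a_{i_p})·(∏_{q∉I} ε_{i_q}), where λ({i₁<…<i_k}) = (i₁−1)(i₂−2)⋯(i_k−k). This expresses the PBW basis in terms of the monomial basis of S(g_a). -/
noncomputable section

/-- `λ(I) = (i₁−1)(i₂−2)⋯(i_k−k)` for `I = {i₁<…<i_k} ⊆ [n]` (elements of `Fin n`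
being identified with `{1,…,n}` via `p ↦ p+1`). -/
def lamCoeffFin {n : ℕ} (I : Finset (Fin n)) : ℤ :=
  ((I.sort (· ≤ ·)).zipIdx.map (fun p => ((p.1 : ℕ) : ℤ) - p.2)).prod

/-!
Induction on `n`. Right `◂`-multiplication of a degree-`d` monomial `m` by `ε_j` gives
`ε_j m + d a_j m`. Hence a subset `I ⊆ [n+1]` either omits `n+1`, and then `ε_{i_{n+1}}` is
simply multiplied in, or contains it, and then the term for `J = I \ {n+1}` picks up
`d · a_{i_{n+1}}` with `d = n - |J|`, which is exactly the last factor of `λ(I)`.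
-/

open Finset MvPolynomial

namespace Fin

theorem sort_map_castSuccEmb {n : ℕ} (J : Finset (Fin n)) :
    (J.map castSuccEmb).sort (· ≤ ·) = (J.sort (· ≤ ·)).map castSucc :=
  (map_sort _ _ _ _ fun _ _ _ _ => castSucc_le_castSucc_iff.symm).symm

theorem sort_insert_last_map_castSuccEmb {n : ℕ} (J : Finset (Fin n)) :
    (insert (last n) (J.map castSuccEmb)).sort (· ≤ ·)
      = (J.map castSuccEmb).sort (· ≤ ·) ++ [last n] := by
  have hnodup : ((J.map castSuccEmb).sort (· ≤ ·) ++ [last n]).Nodup := by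
    simp [List.nodup_append, sort_nodup, (castSucc_lt_last _).ne]
  rw [← (List.toFinset_sort (· ≤ ·) hnodup).2]
  · ext; simp
  · simp [List.pairwise_append, pairwise_sort, le_last]

theorem sum_powerset_univ_succ {M : Type*} [AddCommMonoid M] {n : ℕ}
    (g : Finset (Fin (n + 1)) → M) :
    ∑ I ∈ (univ : Finset (Fin (n + 1))).powerset, g I
      = ∑ J ∈ (univ : Finset (Fin n)).powerset, g (J.map castSuccEmb)
        + ∑ J ∈ (univ : Finset (Fin n)).powerset, g (insert (last n) (J.map castSuccEmb)) := by
  have hinj : Set.InjOn (fun J : Finset (Fin n) => J.image castSucc)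
      ((univ : Finset (Fin n)).powerset : Set _) :=
    image_injOn_powerset_of_injOn (castSucc_injective n).injOn
  rw [univ_castSuccEmb, cons_eq_insert, sum_powerset_insert (by simp)]
  simp only [map_eq_image, coe_castSuccEmb]
  rw [powerset_image, sum_image hinj, sum_image hinj]

theorem univ_sdiff_map_castSuccEmb {n : ℕ} (J : Finset (Fin n)) :
    univ \ J.map castSuccEmb = insert (last n) ((univ \ J).map castSuccEmb) := by
  ext x; induction x using lastCases <;> simp

theorem univ_sdiff_insert_last_map_castSuccEmb {n : ℕ} (J : Finset (Fin n)) :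
    univ \ insert (last n) (J.map castSuccEmb) = (univ \ J).map castSuccEmb := by
  ext x; induction x using lastCases <;> simp

end Fin

theorem lamCoeffFin_map_castSuccEmb {n : ℕ} (J : Finset (Fin n)) :
    lamCoeffFin (J.map Fin.castSuccEmb) = lamCoeffFin J := by
  simp only [lamCoeffFin, Fin.sort_map_castSuccEmb, List.zipIdx_map, List.map_map]
  rfl

theorem lamCoeffFin_insert_last {n : ℕ} (J : Finset (Fin n)) :
    lamCoeffFin (insert (Fin.last n) (J.map Fin.castSuccEmb)) = #(univ \ J) * lamCoeffFin J := by
  rw [← lamCoeffFin_map_castSuccEmb J, lamCoeffFin, Fin.sort_insert_last_map_castSuccEmb,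
    List.zipIdx_append, List.map_append, List.prod_append, lamCoeffFin, mul_comm]
  congr 1
  have hJ : #J ≤ n := card_le_univ J |>.trans_eq (Fintype.card_fin n)
  simp [card_univ_sdiff, hJ]

theorem apply_prod_X_X {K : Type*} [Field K] {N : ℕ} {a : Fin N → K}
    {B : MvPolynomial (Fin N) K →ₗ[K] MvPolynomial (Fin N) K →ₗ[K] MvPolynomial (Fin N) K}
    (hB : ∀ (k l : ℕ) (i : Fin k → Fin N) (j : Fin l → Fin N),
      B (∏ p, X (i p)) (∏ q, X (j q))
        = ∑ I ∈ (univ : Finset (Fin l)).powerset,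
            (((k.descFactorial #I : K) * ∏ q ∈ I, a (j q)) •
              ((∏ q ∈ univ \ I, X (j q)) * ∏ p, X (i p))))
    {ι : Type*} (s : Finset ι) (f : ι → Fin N) (j : Fin N) :
    B (∏ q ∈ s, X (f q)) (X j)
      = X j * ∏ q ∈ s, X (f q) + ((#s : K) * a j) • ∏ q ∈ s, X (f q) := by
  have hs : ∏ q ∈ s, (X (f q) : MvPolynomial (Fin N) K) = ∏ p, X (f (s.equivFin.symm p)) := by
    rw [← prod_coe_sort]; exact (Fintype.prod_equiv s.equivFin _ _ (by simp))
  have hB1 := hB #s 1 (fun p => f (s.equivFin.symm p)) fun _ => j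
  rw [show (univ : Finset (Fin 1)) = insert 0 ∅ from rfl, sum_powerset_insert (notMem_empty 0)]
    at hB1
  simpa [hs] using hB1

/-- in `U(g_a) = (S(g_a), ◂)` (with `S(g_a)` realized as the
polynomial algebra on `ε₁,…,ε_N` and `◂` given by its formula on monomials),
the PBW basis is expressed in the monomial basis by
`ε_{i₁} ◂ ⋯ ◂ ε_{i_n} = Σ_{I⊆[n]} λ(I) (∏_{p∈I} a_{i_p}) ∏_{q∉I} ε_{i_q}`. -/
theorem pbw_in_monomial_basis (K : Type*) [Field K] (N : ℕ) (a : Fin N → K)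
    (B : MvPolynomial (Fin N) K →ₗ[K] MvPolynomial (Fin N) K →ₗ[K] MvPolynomial (Fin N) K)
    (hB : ∀ (k l : ℕ) (i : Fin k → Fin N) (j : Fin l → Fin N),
      B (∏ p, MvPolynomial.X (i p)) (∏ q, MvPolynomial.X (j q))
        = ∑ I ∈ (Finset.univ : Finset (Fin l)).powerset,
            (((k.descFactorial I.card : K) * ∏ q ∈ I, a (j q)) •
              ((∏ q ∈ Finset.univ \ I, MvPolynomial.X (j q)) * ∏ p, MvPolynomial.X (i p)))) :
    ∀ (n : ℕ) (i : Fin n → Fin N),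
      (List.ofFn fun p : Fin n => (MvPolynomial.X (i p) : MvPolynomial (Fin N) K)).foldl
          (fun u v => B u v) 1
        = ∑ I ∈ (Finset.univ : Finset (Fin n)).powerset,
            ((((lamCoeffFin I : ℤ) : K) * ∏ p ∈ I, a (i p)) •
              ∏ q ∈ Finset.univ \ I, MvPolynomial.X (i q)) := by
  intro n
  induction n with
  | zero => simp [lamCoeffFin]
  | succ n ih =>
    intro i
    rw [List.ofFn_succ', List.concat_eq_append, List.foldl_append, ih, Fin.sum_powerset_univ_succ]
    simp only [List.foldl_cons, List.foldl_nil, map_sum, map_smul, LinearMap.sum_apply,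
      LinearMap.smul_apply, apply_prod_X_X hB, smul_add, sum_add_distrib]
    congr 1
    · refine sum_congr rfl fun J _ => ?_
      rw [lamCoeffFin_map_castSuccEmb, prod_map, Fin.univ_sdiff_map_castSuccEmb,
        prod_insert (by simp), prod_map]
      simp
    · refine sum_congr rfl fun J _ => ?_
      rw [lamCoeffFin_insert_last, prod_insert (by simp), prod_map,
        Fin.univ_sdiff_insert_last_map_castSuccEmb, prod_map, smul_smul]
      simp only [Fin.coe_castSuccEmb]
      congr 1
      push_cast
      ring
end
end

section
/- Let V be a module over the non-unital associative algebra (g_{(1,0,…,0)},◁), where ε_i ◁ ε_j = δ_{1,j} ε_i. Then V decomposes as V = V⁽⁰⁾ ⊕ V⁽¹⁾ such that ε₁ acts as the identity on V⁽¹⁾ and as zero on V⁽⁰⁾, and for each i ≥ 2, ε_i maps V⁽¹⁾ into V⁽⁰⁾ and annihilates V⁽⁰⁾. -/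
/-- a module `V` over the non-unital associative algebra
`(g_{(1,0,…,0)}, ◁)` (where `x ◁ y = y₀ • x`) decomposes as `V = V⁽⁰⁾ ⊕ V⁽¹⁾`
with `ε₁` acting as the identity on `V⁽¹⁾` and as `0` on `V⁽⁰⁾`, and `ε_i`
(`i ≥ 2`) mapping `V⁽¹⁾` into `V⁽⁰⁾` and annihilating `V⁽⁰⁾`. -/
theorem assoc_module_decomposition (K : Type*) [Field K] (N : ℕ) [NeZero N]
    (V : Type*) [AddCommGroup V] [Module K V]
    (ρ : (Fin N → K) →ₗ[K] Module.End K V)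
    (hmod : ∀ x y : Fin N → K, ρ (y 0 • x) = ρ x ∘ₗ ρ y) :
    ∃ V0 V1 : Submodule K V, IsCompl V0 V1 ∧
      (∀ v ∈ V1, ρ (Pi.single (0 : Fin N) (1 : K) : Fin N → K) v = v) ∧
      (∀ v ∈ V0, ρ (Pi.single (0 : Fin N) (1 : K) : Fin N → K) v = 0) ∧
      (∀ i : Fin N, i ≠ 0 →
        (∀ v ∈ V1, ρ (Pi.single i (1 : K) : Fin N → K) v ∈ V0) ∧
        (∀ v ∈ V0, ρ (Pi.single i (1 : K) : Fin N → K) v = 0)) := by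
  set ε₁ : Fin N → K := Pi.single (0 : Fin N) (1 : K) with hε₁
  set e : Module.End K V := ρ ε₁ with he
  have hε₁0 : ε₁ 0 = 1 := by simp [hε₁]
  -- e is idempotent
  have hidem : e ∘ₗ e = e := by
    have := hmod ε₁ ε₁
    rw [hε₁0, one_smul] at this
    exact this.symm
  have hidem' : ∀ v, e (e v) = e v := fun v => congrFun (congrArg DFunLike.coe hidem) v
  refine ⟨LinearMap.ker e, LinearMap.range e, ?_, ?_, ?_, ?_⟩
  · constructor
    · rw [disjoint_iff_inf_le]
      rintro v ⟨hv0, w, rfl⟩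
      have : e (e w) = 0 := hv0
      rw [hidem'] at this
      simp [this]
    · rw [codisjoint_iff_le_sup]
      intro v _
      have : v = (v - e v) + e v := by abel
      rw [this]
      exact Submodule.add_mem_sup (by simp [hidem' v]) ⟨v, rfl⟩
  · rintro v ⟨w, rfl⟩
    exact hidem' w
  · exact fun v hv => hv
  · intro i hi
    have hεi0 : (Pi.single i (1 : K) : Fin N → K) 0 = 0 := Pi.single_eq_of_ne (Ne.symm hi) 1
    have h1 : e ∘ₗ ρ (Pi.single i (1 : K)) = 0 := by
      have := hmod ε₁ (Pi.single i (1 : K))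
      rw [hεi0, zero_smul, map_zero] at this
      exact this.symm
    have h2 : ρ (Pi.single i (1 : K)) ∘ₗ e = ρ (Pi.single i (1 : K)) := by
      have := hmod (Pi.single i (1 : K)) ε₁
      rw [hε₁0, one_smul] at this
      exact this.symm
    constructor
    · intro v _
      show e _ = 0
      exact congrFun (congrArg DFunLike.coe h1) v
    · intro v hv
      have := congrFun (congrArg DFunLike.coe h2) v
      simp only [LinearMap.comp_apply] at this
      rw [← this, show e v = 0 from hv, map_zero]
end

section
/- Let a = (1,0) ∈ K², V = span(x₁,x₂) with F₁ given by the matrix [[0,0],[0,1]] and F₂ by [[0,1],[0,0]] in the basis (x₁,x₂). Grade V by deg(x₂)=1, deg(x₁)=2, and grade g_SISO = T(V)² by assigning degree n to T(V)_n ε₁ and degree n+1 to T(V)_n ε₂. Then the dimensions of the homogeneous components of g_SISO satisfy the Fibonacci recursion: the generating series is (1+X)/(1−X−X²), so dim((g_SISO)_n) = Fib(n+2) for n ≥ 0 (with Fib(1)=Fib(2)=1). -/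
/-!
A word in `x₁, x₂` of weight `n + 2` starts either with `x₂`, followed by a word of weight
`n + 1`, or with `x₁`, followed by a word of weight `n`; so the number of words of weight `n`
is `Fib (n + 1)`. The monomials of these words are part of the monomial basis of `T(V)`, hence
`dim T(V)_n = Fib (n + 1)` and `dim (g_SISO)_n = Fib (n + 1) + Fib n = Fib (n + 2)`.
-/

noncomputable section

variable (K : Type*) [Field K]

/-- The homogeneous component of degree `n` of `T(V)` for `V = span(x₁,x₂)`,
graded by `deg x₂ = 1`, `deg x₁ = 2`: the span of the words in the letters
`x₁, x₂` of total weight `n` (letter `0` is `x₁`, letter `1` is `x₂`). -/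
def gradedPiece (n : ℕ) : Submodule K (TensorAlgebra K (Fin 2 → K)) :=
  Submodule.span K
    {w | ∃ l : List (Fin 2),
      (l.map fun i : Fin 2 => if (i : ℕ) = 0 then 2 else 1).sum = n ∧
      w = (l.map fun i : Fin 2 =>
        TensorAlgebra.ι K (Pi.single i (1 : K) : Fin 2 → K)).prod}

/-- The homogeneous component of degree `n` of `g_SISO = T(V)²`:
`(g_SISO)_n = T(V)_n ε₁ ⊕ T(V)_{n−1} ε₂`. -/
def sisoPiece (n : ℕ) :
    Submodule K (TensorAlgebra K (Fin 2 → K) × TensorAlgebra K (Fin 2 → K)) :=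
  (gradedPiece K n).prod (if n = 0 then ⊥ else gradedPiece K (n - 1))

open Module Submodule

theorem FreeAlgebra.basisFreeMonoid_apply (R X : Type*) [CommSemiring R] (w : FreeMonoid X) :
    FreeAlgebra.basisFreeMonoid R X w = (w.toList.map (FreeAlgebra.ι R)).prod := by
  change FreeAlgebra.equivMonoidAlgebraFreeMonoid.symm (MonoidAlgebra.single w 1) = _
  simp [FreeAlgebra.equivMonoidAlgebraFreeMonoid, MonoidAlgebra.lift_single, FreeMonoid.lift_apply]

theorem Module.Basis.tensorAlgebra_ofList {R M κ : Type*} [CommSemiring R] [AddCommMonoid M]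
    [Module R M] (b : Basis κ R M) (l : List κ) :
    b.tensorAlgebra (FreeMonoid.ofList l) = (l.map fun i => TensorAlgebra.ι R (b i)).prod := by
  simp [Basis.tensorAlgebra, FreeAlgebra.basisFreeMonoid_apply, map_list_prod, Function.comp_def]

theorem LinearIndepOn.finrank_span_image {R M ι : Type*} [Ring R] [StrongRankCondition R]
    [AddCommGroup M] [Module R M] {v : ι → M} {s : Set ι} (hs : LinearIndepOn R v s) :
    finrank R (span R (v '' s)) = s.ncard := by
  rw [finrank, Set.ncard_def, ← Cardinal.toNat_toENat, toENat_rank_span_set hs]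

def Submodule.prodEquiv {R M N : Type*} [Semiring R] [AddCommMonoid M] [AddCommMonoid N]
    [Module R M] [Module R N] (p : Submodule R M) (q : Submodule R N) :
    p.prod q ≃ₗ[R] p × q where
  toFun x := (⟨x.1.1, x.2.1⟩, ⟨x.1.2, x.2.2⟩)
  invFun y := ⟨(y.1, y.2), y.1.2, y.2.2⟩
  map_add' _ _ := rfl
  map_smul' _ _ := rfl

theorem Submodule.finrank_prod {R M N : Type*} [Ring R] [StrongRankCondition R] [AddCommGroup M]
    [AddCommGroup N] [Module R M] [Module R N] (p : Submodule R M) (q : Submodule R N)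
    [Module.Free R p] [Module.Free R q] [Module.Finite R p] [Module.Finite R q] :
    finrank R (p.prod q) = finrank R p + finrank R q := by
  rw [(p.prodEquiv q).finrank_eq, Module.finrank_prod]

def letterWeight (i : Fin 2) : ℕ := if (i : ℕ) = 0 then 2 else 1

def wordsOfWeight (n : ℕ) : Set (List (Fin 2)) := {l | (l.map letterWeight).sum = n}

lemma wordsOfWeight_zero : wordsOfWeight 0 = {[]} := by
  ext (_ | ⟨i, l⟩)
  · simp [wordsOfWeight]
  · fin_cases i <;> simp [wordsOfWeight, letterWeight]

lemma wordsOfWeight_one : wordsOfWeight 1 = {[1]} := by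
  ext (_ | ⟨i, l⟩)
  · simp [wordsOfWeight]
  · fin_cases i
    · simp [wordsOfWeight, letterWeight]; omega
    · simpa [letterWeight, wordsOfWeight] using Set.ext_iff.mp wordsOfWeight_zero l

lemma wordsOfWeight_add_two (n : ℕ) :
    wordsOfWeight (n + 2) =
      List.cons 1 '' wordsOfWeight (n + 1) ∪ List.cons 0 '' wordsOfWeight n := by
  ext (_ | ⟨i, l⟩)
  · simp [wordsOfWeight]
  · fin_cases i <;> simp [letterWeight, wordsOfWeight] <;> omega

lemma encard_wordsOfWeight : ∀ n, (wordsOfWeight n).encard = Nat.fib (n + 1)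
  | 0 => by simp [wordsOfWeight_zero]
  | 1 => by simp [wordsOfWeight_one]
  | n + 2 => by
    rw [wordsOfWeight_add_two, Set.encard_union_eq, List.cons_injective.encard_image,
      List.cons_injective.encard_image, encard_wordsOfWeight (n + 1), encard_wordsOfWeight n,
      Nat.fib_add_two (n := n + 1), add_comm, Nat.cast_add]
    exact Set.disjoint_left.mpr (by simp)

lemma ncard_wordsOfWeight (n : ℕ) : (wordsOfWeight n).ncard = Nat.fib (n + 1) := by
  rw [Set.ncard_def, encard_wordsOfWeight, ENat.toNat_natCast]

lemma gradedPiece_eq_span_image (n : ℕ) :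
    gradedPiece K n = span K ((fun l => (Pi.basisFun K (Fin 2)).tensorAlgebra
      (FreeMonoid.ofList l)) '' wordsOfWeight n) := by
  have basis_word (l : List (Fin 2)) :
      (Pi.basisFun K (Fin 2)).tensorAlgebra (FreeMonoid.ofList l) =
        (l.map fun i => TensorAlgebra.ι K (Pi.single i (1 : K) : Fin 2 → K)).prod := by
    simp [Basis.tensorAlgebra_ofList]
  rw [gradedPiece]
  congr 1
  ext w
  constructor <;> rintro ⟨l, hl, rfl⟩ <;> exact ⟨l, hl, basis_word l⟩

lemma finrank_gradedPiece (n : ℕ) : finrank K (gradedPiece K n) = Nat.fib (n + 1) := by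
  rw [gradedPiece_eq_span_image, LinearIndepOn.finrank_span_image, ncard_wordsOfWeight]
  exact ((Pi.basisFun K (Fin 2)).tensorAlgebra.linearIndependent.comp _
    FreeMonoid.ofList.injective).linearIndepOn _

instance (n : ℕ) : FiniteDimensional K (gradedPiece K n) :=
  Module.finite_of_finrank_pos (by rw [finrank_gradedPiece]; exact Nat.fib_pos.mpr n.succ_pos)

/-- the dimensions of the homogeneous components of `g_SISO`
form the Fibonacci sequence: `dim (g_SISO)_n = Fib(n+2)` (generating series
`(1+X)/(1−X−X²)`). -/
theorem siso_dimensions_fibonacci :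
    ∀ n : ℕ, Module.finrank K (sisoPiece K n) = Nat.fib (n + 2) := by
  rintro (_ | n)
  · rw [sisoPiece, if_pos rfl, Submodule.finrank_prod, finrank_gradedPiece, finrank_bot]
    rfl
  · rw [sisoPiece, if_neg n.succ_ne_zero, n.add_sub_cancel, Submodule.finrank_prod,
      finrank_gradedPiece, finrank_gradedPiece, Nat.fib_add_two (n := n + 1), add_comm]

end
end
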